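/- Double-weighting identity: for discrete (W,A,Z,M) with strictly positive joint pmf and any bounded φ(Z,M,W), E[ 1{A=a'}/g(a'|W) · c(a',Z,M,W) · φ(Z,M,W) ] = E[ 1{A=a*}/g(a*|W) · φ̃(M,W) ], where c(a,z,m,w) = p(m|a*,w)/p(m|a,z,w), g(a|w) = P(A=a|W=w), and φ̃(m,w) = Σ_z φ(z,m,w) P(Z=z|A=a',W=w). -/
import Mathlib


open Finset
open scoped Classical

/-- Probability of the event `S` under the pmf `P` on a finite outcome space. -/
noncomputable def pr {Ω : Type*} [Fintype Ω] (P : Ω → ℝ) (S : Ω → Prop) : ℝ :=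
  ∑ ω, if S ω then P ω else 0

/-- Conditional probability `P(S | T)`. -/
noncomputable def cpr {Ω : Type*} [Fintype Ω] (P : Ω → ℝ) (S T : Ω → Prop) : ℝ :=
  pr P (fun ω => S ω ∧ T ω) / pr P T

/-- Conditional expectation `E[f | T]` (pmf-weighted average). -/
noncomputable def cex {Ω : Type*} [Fintype Ω] (P : Ω → ℝ) (f : Ω → ℝ)
    (T : Ω → Prop) : ℝ :=
  (∑ ω, if T ω then P ω * f ω else 0) / pr P T

section aux
variable {Ω : Type*} [Fintype Ω]

lemma pr_congr (P : Ω → ℝ) {S T : Ω → Prop} (h : ∀ ω, S ω ↔ T ω) : pr P S = pr P T := by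
  unfold pr; exact Finset.sum_congr rfl fun ω _ => by rw [h ω]

lemma pr_mono (P : Ω → ℝ) (hP : ∀ ω, 0 ≤ P ω) {S T : Ω → Prop} (h : ∀ ω, S ω → T ω) :
    pr P S ≤ pr P T := by
  unfold pr
  apply Finset.sum_le_sum
  intro ω _
  by_cases hs : S ω
  · simp [hs, h ω hs]
  · simp only [hs, if_false]
    split_ifs
    · exact hP ω
    · exact le_rfl

lemma pr_pos_elim (P : Ω → ℝ) {S : Ω → Prop} (h : 0 < pr P S) : ∃ ω, S ω := by
  by_contra hc
  push_neg at hc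
  have : pr P S = 0 := Finset.sum_eq_zero fun ω _ => by simp [hc ω]
  linarith

lemma group3 {𝒲 𝒜 𝒵 ℳ : Type*} [Fintype 𝒲] [Fintype 𝒵] [Fintype ℳ]
    (P : Ω → ℝ) (W : Ω → 𝒲) (A : Ω → 𝒜) (Z : Ω → 𝒵) (M : Ω → ℳ) (a : 𝒜)
    (F : 𝒲 → 𝒵 → ℳ → ℝ) :
    ∑ ω, (if A ω = a then P ω else 0) * F (W ω) (Z ω) (M ω)
      = ∑ w, ∑ z, ∑ m, pr P (fun ω => W ω = w ∧ A ω = a ∧ Z ω = z ∧ M ω = m) * F w z m := by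
  unfold pr
  have hω : ∀ ω, (if A ω = a then P ω else 0) * F (W ω) (Z ω) (M ω)
      = ∑ w, ∑ z, ∑ m, (if W ω = w ∧ A ω = a ∧ Z ω = z ∧ M ω = m then P ω else 0) * F w z m := by
    intro ω
    by_cases hA : A ω = a
    · simp [hA, ite_and, ite_mul, zero_mul, Finset.sum_ite_eq]
    · simp [hA, ite_and, ite_mul, zero_mul]
  simp_rw [hω, Finset.sum_mul, ite_mul, zero_mul]
  rw [Finset.sum_comm]
  refine Finset.sum_congr rfl fun w _ => ?_
  rw [Finset.sum_comm]
  refine Finset.sum_congr rfl fun z _ => ?_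
  rw [Finset.sum_comm]

lemma pr_sum_z {𝒲 𝒜 𝒵 ℳ : Type*} [Fintype 𝒵]
    (P : Ω → ℝ) (W : Ω → 𝒲) (A : Ω → 𝒜) (Z : Ω → 𝒵) (M : Ω → ℳ) (a : 𝒜) (w : 𝒲) (m : ℳ) :
    ∑ z, pr P (fun ω => W ω = w ∧ A ω = a ∧ Z ω = z ∧ M ω = m)
      = pr P (fun ω => W ω = w ∧ A ω = a ∧ M ω = m) := by
  unfold pr
  rw [Finset.sum_comm]
  refine Finset.sum_congr rfl fun ω _ => ?_
  by_cases h1 : W ω = w <;> by_cases h2 : A ω = a <;> by_cases h3 : M ω = m <;>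
    simp [h1, h2, h3, Finset.sum_ite_eq]

end aux

/-- Double-weighting identity:
`E[ 1{A=a'}/g(a'|W) ⬝ c(a',Z,M,W) ⬝ φ(Z,M,W) ] = E[ 1{A=a*}/g(a*|W) ⬝ φ̃(M,W) ]`,
where `c(a,z,m,w) = p(m|a*,w)/p(m|a,z,w)` and
`φ̃(m,w) = Σ_z φ(z,m,w) P(Z=z|A=a',W=w)`. -/
theorem double_weighting_identity {Ω 𝒲 𝒜 𝒵 ℳ : Type*} [Fintype Ω] [Fintype 𝒵]
    (P : Ω → ℝ) (hP : ∀ ω, 0 ≤ P ω) (hsum : ∑ ω, P ω = 1)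
    (W : Ω → 𝒲) (A : Ω → 𝒜) (Z : Ω → 𝒵) (M : Ω → ℳ)
    (hpos : ∀ w a z m,
      0 < pr P (fun ω => W ω = w ∧ A ω = a ∧ Z ω = z ∧ M ω = m))
    (a' astar : 𝒜) (φ : 𝒵 → ℳ → 𝒲 → ℝ) :
    ∑ ω, P ω *
        ((if A ω = a' then (1 : ℝ) else 0) /
            cpr P (fun ω' => A ω' = a') (fun ω' => W ω' = W ω) *
          (cpr P (fun ω' => M ω' = M ω) (fun ω' => A ω' = astar ∧ W ω' = W ω) /
            cpr P (fun ω' => M ω' = M ω)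
              (fun ω' => A ω' = a' ∧ Z ω' = Z ω ∧ W ω' = W ω)) *
          φ (Z ω) (M ω) (W ω)) =
      ∑ ω, P ω *
        ((if A ω = astar then (1 : ℝ) else 0) /
            cpr P (fun ω' => A ω' = astar) (fun ω' => W ω' = W ω) *
          ∑ z, φ z (M ω) (W ω) *
            cpr P (fun ω' => Z ω' = z) (fun ω' => A ω' = a' ∧ W ω' = W ω)) := by
  rcases isEmpty_or_nonempty Ω with hE | hNe
  · simp
  obtain ⟨ω₀⟩ := hNe
  have hWs : Function.Surjective W := fun w => by
    obtain ⟨ω, hω⟩ := pr_pos_elim P (hpos w a' (Z ω₀) (M ω₀)); exact ⟨ω, hω.1⟩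
  have hMs : Function.Surjective M := fun m => by
    obtain ⟨ω, hω⟩ := pr_pos_elim P (hpos (W ω₀) a' (Z ω₀) m); exact ⟨ω, hω.2.2.2⟩
  letI : Fintype 𝒲 := Fintype.ofSurjective W hWs
  letI : Fintype ℳ := Fintype.ofSurjective M hMs
  -- abbreviations as functions of values
  have key1 := group3 P W A Z M a' (fun w z m =>
    (1 / cpr P (fun ω' => A ω' = a') (fun ω' => W ω' = w)) *
      ((cpr P (fun ω' => M ω' = m) (fun ω' => A ω' = astar ∧ W ω' = w) /
        cpr P (fun ω' => M ω' = m) (fun ω' => A ω' = a' ∧ Z ω' = z ∧ W ω' = w)) *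
       φ z m w))
  have key2 := group3 P W A Z M astar (fun w _ m =>
    (1 / cpr P (fun ω' => A ω' = astar) (fun ω' => W ω' = w)) *
      ∑ z', φ z' m w * cpr P (fun ω' => Z ω' = z') (fun ω' => A ω' = a' ∧ W ω' = w))
  have hL : (∑ ω, P ω *
        ((if A ω = a' then (1 : ℝ) else 0) /
            cpr P (fun ω' => A ω' = a') (fun ω' => W ω' = W ω) *
          (cpr P (fun ω' => M ω' = M ω) (fun ω' => A ω' = astar ∧ W ω' = W ω) /
            cpr P (fun ω' => M ω' = M ω)
              (fun ω' => A ω' = a' ∧ Z ω' = Z ω ∧ W ω' = W ω)) *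
          φ (Z ω) (M ω) (W ω)))
      = ∑ ω, (if A ω = a' then P ω else 0) *
          ((1 / cpr P (fun ω' => A ω' = a') (fun ω' => W ω' = W ω)) *
            ((cpr P (fun ω' => M ω' = M ω) (fun ω' => A ω' = astar ∧ W ω' = W ω) /
              cpr P (fun ω' => M ω' = M ω)
                (fun ω' => A ω' = a' ∧ Z ω' = Z ω ∧ W ω' = W ω)) *
             φ (Z ω) (M ω) (W ω))) := by
    refine Finset.sum_congr rfl fun ω _ => ?_
    by_cases h : A ω = a' <;> simp only [h, if_true, if_false] <;> ring
  have hR : (∑ ω, P ω *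
        ((if A ω = astar then (1 : ℝ) else 0) /
            cpr P (fun ω' => A ω' = astar) (fun ω' => W ω' = W ω) *
          ∑ z, φ z (M ω) (W ω) *
            cpr P (fun ω' => Z ω' = z) (fun ω' => A ω' = a' ∧ W ω' = W ω)))
      = ∑ ω, (if A ω = astar then P ω else 0) *
          ((1 / cpr P (fun ω' => A ω' = astar) (fun ω' => W ω' = W ω)) *
            ∑ z', φ z' (M ω) (W ω) *
              cpr P (fun ω' => Z ω' = z') (fun ω' => A ω' = a' ∧ W ω' = W ω)) := by
    refine Finset.sum_congr rfl fun ω _ => ?_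
    by_cases h : A ω = astar <;> simp only [h, if_true, if_false] <;> ring
  rw [hL, hR, key1, key2]
  refine Finset.sum_congr rfl fun w _ => ?_
  rw [Finset.sum_comm]
  conv_rhs => rw [Finset.sum_comm]
  refine Finset.sum_congr rfl fun m _ => ?_
  -- now fixed w, m; goal: sum over z
  have hpw : 0 < pr P (fun ω => W ω = w) :=
    lt_of_lt_of_le (hpos w a' (Z ω₀) (M ω₀)) (pr_mono P hP (by tauto))
  have hgp : 0 < pr P (fun ω => A ω = a' ∧ W ω = w) :=
    lt_of_lt_of_le (hpos w a' (Z ω₀) (M ω₀)) (pr_mono P hP (by tauto))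
  have hgq : 0 < pr P (fun ω => A ω = astar ∧ W ω = w) :=
    lt_of_lt_of_le (hpos w astar (Z ω₀) (M ω₀)) (pr_mono P hP (by tauto))
  have hNm : 0 < pr P (fun ω => M ω = m ∧ (A ω = astar ∧ W ω = w)) :=
    lt_of_lt_of_le (hpos w astar (Z ω₀) m) (pr_mono P hP (by tauto))
  have hcommon : ∀ z, pr P (fun ω => W ω = w ∧ A ω = a' ∧ Z ω = z ∧ M ω = m) *
      ((1 / cpr P (fun ω' => A ω' = a') (fun ω' => W ω' = w)) *
        ((cpr P (fun ω' => M ω' = m) (fun ω' => A ω' = astar ∧ W ω' = w) /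
          cpr P (fun ω' => M ω' = m) (fun ω' => A ω' = a' ∧ Z ω' = z ∧ W ω' = w)) *
         φ z m w))
      = (pr P (fun ω => W ω = w) * pr P (fun ω => M ω = m ∧ (A ω = astar ∧ W ω = w)) /
          (pr P (fun ω => A ω = a' ∧ W ω = w) * pr P (fun ω => A ω = astar ∧ W ω = w))) *
        (pr P (fun ω => Z ω = z ∧ (A ω = a' ∧ W ω = w)) * φ z m w) := by
    intro z
    have hD : 0 < pr P (fun ω => M ω = m ∧ (A ω = a' ∧ Z ω = z ∧ W ω = w)) :=
      lt_of_lt_of_le (hpos w a' z m) (pr_mono P hP (by tauto))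
    have hE : 0 < pr P (fun ω => A ω = a' ∧ Z ω = z ∧ W ω = w) :=
      lt_of_lt_of_le (hpos w a' z m) (pr_mono P hP (by tauto))
    have e1 : pr P (fun ω => W ω = w ∧ A ω = a' ∧ Z ω = z ∧ M ω = m)
        = pr P (fun ω => M ω = m ∧ (A ω = a' ∧ Z ω = z ∧ W ω = w)) :=
      pr_congr P (by tauto)
    have e2 : pr P (fun ω => Z ω = z ∧ (A ω = a' ∧ W ω = w))
        = pr P (fun ω => A ω = a' ∧ Z ω = z ∧ W ω = w) :=
      pr_congr P (by tauto)
    simp only [cpr]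
    rw [e1, e2]
    field_simp [hpw.ne', hgp.ne', hgq.ne', hD.ne', hE.ne']
  calc
    ∑ z, pr P (fun ω => W ω = w ∧ A ω = a' ∧ Z ω = z ∧ M ω = m) *
      ((1 / cpr P (fun ω' => A ω' = a') (fun ω' => W ω' = w)) *
        ((cpr P (fun ω' => M ω' = m) (fun ω' => A ω' = astar ∧ W ω' = w) /
          cpr P (fun ω' => M ω' = m) (fun ω' => A ω' = a' ∧ Z ω' = z ∧ W ω' = w)) *
         φ z m w))
        = ∑ z, (pr P (fun ω => W ω = w) * pr P (fun ω => M ω = m ∧ (A ω = astar ∧ W ω = w)) /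
            (pr P (fun ω => A ω = a' ∧ W ω = w) * pr P (fun ω => A ω = astar ∧ W ω = w))) *
          (pr P (fun ω => Z ω = z ∧ (A ω = a' ∧ W ω = w)) * φ z m w) :=
      Finset.sum_congr rfl fun z _ => hcommon z
    _ = ∑ z, pr P (fun ω => W ω = w ∧ A ω = astar ∧ Z ω = z ∧ M ω = m) *
          ((1 / cpr P (fun ω' => A ω' = astar) (fun ω' => W ω' = w)) *
            ∑ z', φ z' m w * cpr P (fun ω' => Z ω' = z') (fun ω' => A ω' = a' ∧ W ω' = w)) := by
      rw [← Finset.sum_mul, pr_sum_z]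
      have e3 : pr P (fun ω => W ω = w ∧ A ω = astar ∧ M ω = m)
          = pr P (fun ω => M ω = m ∧ (A ω = astar ∧ W ω = w)) := pr_congr P (by tauto)
      rw [e3]
      simp only [cpr]
      simp_rw [Finset.mul_sum]
      refine Finset.sum_congr rfl fun z _ => ?_
      field_simp [hpw.ne', hgp.ne', hgq.ne']
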